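/- arXiv:1804.08755 — 8 statements merged into one kernel-verified Lean document; each statement's English description precedes it below -/
import Mathlib

section
/- If V solves the Sylvester equation A V = E V S + B R with S diagonalizable via T S T⁻¹ = diag(σ₁,…,σ_q) and R T⁻¹ = [r₁,…,r_q], then each column of V T⁻¹ equals (A - σᵢE)⁻¹ B rᵢ; consequently any reduced model G_r(s) = C V (s W^T E V - W^T A V)⁻¹ W^T B with σᵢ outside both spectra satisfies the right tangential interpolation conditions G(σᵢ) rᵢ = G_r(σᵢ) rᵢ. -/
/-!
Conjugating the Sylvester equation by `T` diagonalizes it, so the `i`-th column `vᵢ` of `V T⁻¹`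
solves `(A - σᵢ E) vᵢ = B rᵢ`. Since `vᵢ = V xᵢ` lies in the range of `V`, multiplying
`(σᵢ E - A) V (-xᵢ) = B rᵢ` by `Wᵀ` shows that the reduced pencil sends `-xᵢ` to `Wᵀ B rᵢ`;
hence `G(σᵢ) rᵢ` and `G_r(σᵢ) rᵢ` both equal `-C vᵢ`.
-/

open Matrix

section

variable {K : Type*} [CommRing K] {ι κ μ ν : Type*}
  [Fintype ι] [Fintype κ] [DecidableEq κ] [Fintype μ]

noncomputable def transferFunction [DecidableEq ι] (E A : Matrix ι ι K) (B : Matrix ι μ K)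
    (C : Matrix ν ι K) (s : K) : Matrix ν μ K :=
  C * (s • E - A)⁻¹ * B

lemma inv_mulVec_eq_of_mulVec_eq [DecidableEq ι] {M : Matrix ι ι K} (hM : IsUnit M.det)
    {x b : ι → K} (h : M *ᵥ x = b) : M⁻¹ *ᵥ b = x :=
  have := M.invertibleOfIsUnitDet hM
  inv_mulVec_eq_vec h.symm

lemma isUnit_det_sub_comm [DecidableEq ι] {M N : Matrix ι ι K} (h : IsUnit (M - N).det) :
    IsUnit (N - M).det := by
  rw [← neg_sub, det_neg]
  exact (isUnit_one.neg.pow _).mul h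

lemma sylvester_mul_nonsing_inv {E A : Matrix ι ι K} {B : Matrix ι μ K} {V : Matrix ι κ K}
    {S T D : Matrix κ κ K} {R : Matrix μ κ K} (hT : IsUnit T.det) (hD : T * S * T⁻¹ = D)
    (hSyl : A * V = E * V * S + B * R) :
    A * (V * T⁻¹) = E * (V * T⁻¹) * D + B * (R * T⁻¹) := by
  rw [← hD, ← Matrix.mul_assoc, hSyl, Matrix.add_mul, Matrix.mul_assoc B]
  simp only [Matrix.mul_assoc, nonsing_inv_mul_cancel_left _ _ hT]

lemma pencil_mulVec_col_of_sylvester_diagonal {E A : Matrix ι ι K} {B : Matrix ι μ K}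
    {X : Matrix ι κ K} {Y : Matrix μ κ K} {σ : κ → K}
    (h : A * X = E * X * diagonal σ + B * Y) (i : κ) :
    (A - σ i • E) *ᵥ X.col i = B *ᵥ Y.col i := by
  ext j
  have hij := congrFun (congrFun h j) i
  simp only [Matrix.add_apply, mul_diagonal] at hij
  simp only [mulVec, dotProduct, Matrix.sub_apply, Matrix.smul_apply, smul_eq_mul, col_apply,
    sub_mul, Finset.sum_sub_distrib, mul_assoc, ← Finset.mul_sum]
  simp only [mul_apply] at hij
  linear_combination hij

lemma transferFunction_mulVec_eq_reduced [DecidableEq ι] {E A : Matrix ι ι K} {B : Matrix ι μ K}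
    {C : Matrix ν ι K} {V W : Matrix ι κ K} {s : K} {x : κ → K} {r : μ → K}
    (hfull : IsUnit (s • E - A).det) (hred : IsUnit (s • (Wᵀ * E * V) - Wᵀ * A * V).det)
    (hx : (s • E - A) *ᵥ (V *ᵥ x) = B *ᵥ r) :
    transferFunction E A B C s *ᵥ r
      = transferFunction (Wᵀ * E * V) (Wᵀ * A * V) (Wᵀ * B) (C * V) s *ᵥ r := by
  have hxred : (s • (Wᵀ * E * V) - Wᵀ * A * V) *ᵥ x = Wᵀ *ᵥ (B *ᵥ r) := by
    rw [← hx, mulVec_mulVec, mulVec_mulVec]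
    congr 1
    simp only [Matrix.mul_sub, Matrix.sub_mul, Matrix.mul_smul, Matrix.smul_mul, Matrix.mul_assoc]
  simp only [transferFunction, ← mulVec_mulVec]
  rw [inv_mulVec_eq_of_mulVec_eq hfull hx, inv_mulVec_eq_of_mulVec_eq hred hxred]

end

theorem stmt1_general {n m p q : ℕ}
    (E A : Matrix (Fin n) (Fin n) ℂ) (B : Matrix (Fin n) (Fin m) ℂ)
    (C : Matrix (Fin p) (Fin n) ℂ)
    (V W : Matrix (Fin n) (Fin q) ℂ)
    (S : Matrix (Fin q) (Fin q) ℂ) (R : Matrix (Fin m) (Fin q) ℂ)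
    (T : Matrix (Fin q) (Fin q) ℂ) (hT : IsUnit T.det)
    (σ : Fin q → ℂ)
    (hdiag : T * S * T⁻¹ = Matrix.diagonal σ)
    (hσspec : ∀ i, IsUnit (A - σ i • E).det)
    (hSyl : A * V = E * V * S + B * R)
    (hred : ∀ i, IsUnit (σ i • (Wᵀ * E * V) - Wᵀ * A * V).det) :
    (∀ i, (fun j => (V * T⁻¹) j i)
        = (A - σ i • E)⁻¹ *ᵥ (B *ᵥ fun k => (R * T⁻¹) k i)) ∧
    (∀ i, (C * (σ i • E - A)⁻¹ * B) *ᵥ (fun k => (R * T⁻¹) k i)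
        = (C * V * (σ i • (Wᵀ * E * V) - Wᵀ * A * V)⁻¹ * (Wᵀ * B)) *ᵥ
            (fun k => (R * T⁻¹) k i)) := by
  have hcol :=
    pencil_mulVec_col_of_sylvester_diagonal (sylvester_mul_nonsing_inv hT hdiag hSyl)
  refine ⟨fun i => (inv_mulVec_eq_of_mulVec_eq (hσspec i) (hcol i)).symm, fun i => ?_⟩
  refine transferFunction_mulVec_eq_reduced (x := -(T⁻¹ *ᵥ Pi.single i 1))
    (isUnit_det_sub_comm (hσspec i)) (hred i) ?_
  rw [mulVec_neg, mulVec_mulVec, mulVec_single_one, mulVec_neg, ← neg_mulVec, neg_sub, hcol i]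
  rfl

/-- If `V` solves `A V = E V S + B R` with `S` diagonalizable via
`T S T⁻¹ = diag(σᵢ)` and `R T⁻¹ = [r₁,…,r_q]`, then the columns of `V T⁻¹` are
`(A - σᵢ E)⁻¹ B rᵢ`, and any Petrov-Galerkin reduced model whose pencil has no
eigenvalue among the `σᵢ` satisfies the right tangential interpolation conditions. -/
theorem stmt1 {n m p q : ℕ}
    (E A : Matrix (Fin n) (Fin n) ℂ) (B : Matrix (Fin n) (Fin m) ℂ)
    (C : Matrix (Fin p) (Fin n) ℂ)
    (V W : Matrix (Fin n) (Fin q) ℂ)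
    (S : Matrix (Fin q) (Fin q) ℂ) (R : Matrix (Fin m) (Fin q) ℂ)
    (T : Matrix (Fin q) (Fin q) ℂ) (hT : IsUnit T.det)
    (σ : Fin q → ℂ) (hσ : Function.Injective σ)
    (hdiag : T * S * T⁻¹ = Matrix.diagonal σ)
    (hRT : ∀ i, (fun k => (R * T⁻¹) k i) ≠ 0)
    (hσspec : ∀ i, IsUnit (A - σ i • E).det)
    (hSyl : A * V = E * V * S + B * R)
    (hred : ∀ i, IsUnit (σ i • (Wᵀ * E * V) - Wᵀ * A * V).det) :
    (∀ i, (fun j => (V * T⁻¹) j i)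
        = (A - σ i • E)⁻¹ *ᵥ (B *ᵥ fun k => (R * T⁻¹) k i)) ∧
    (∀ i, (C * (σ i • E - A)⁻¹ * B) *ᵥ (fun k => (R * T⁻¹) k i)
        = (C * V * (σ i • (Wᵀ * E * V) - Wᵀ * A * V)⁻¹ * (Wᵀ * B)) *ᵥ
            (fun k => (R * T⁻¹) k i)) :=
  stmt1_general E A B C V W S R T hT σ hdiag hσspec hSyl hred
end

section
/- If Image(V) contains the vectors (A - σᵢ E)⁻¹ B rᵢ for i = 1,…,q, then the Petrov–Galerkin reduced model with matrices E_r = W^T E V, A_r = W^T A V, B_r = W^T B, C_r = C V satisfies G(σᵢ) rᵢ = G_r(σᵢ) rᵢ for all i, provided σᵢ is not a generalized eigenvalue of (E_r, A_r). -/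
open Matrix

/-- If `Image(V)` contains the vectors `(A - σᵢ E)⁻¹ B rᵢ`, then the
Petrov-Galerkin reduced model `(WᵀEV, WᵀAV, WᵀB, CV)` matches `G(σᵢ) rᵢ = G_r(σᵢ) rᵢ`,
provided `σᵢ` is not a generalized eigenvalue of the reduced pencil. -/
theorem stmt2 {n m p q : ℕ}
    (E A : Matrix (Fin n) (Fin n) ℂ) (B : Matrix (Fin n) (Fin m) ℂ)
    (C : Matrix (Fin p) (Fin n) ℂ)
    (V W : Matrix (Fin n) (Fin q) ℂ)
    (σ : Fin q → ℂ) (r : Fin q → Fin m → ℂ) (hr : ∀ i, r i ≠ 0)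
    (hfull : ∀ i, IsUnit (σ i • E - A).det)
    (hred : ∀ i, IsUnit (σ i • (Wᵀ * E * V) - Wᵀ * A * V).det)
    (hmem : ∀ i, ∃ x : Fin q → ℂ, V *ᵥ x = (A - σ i • E)⁻¹ *ᵥ (B *ᵥ r i)) :
    ∀ i, (C * (σ i • E - A)⁻¹ * B) *ᵥ r i
        = (C * V * (σ i • (Wᵀ * E * V) - Wᵀ * A * V)⁻¹ * (Wᵀ * B)) *ᵥ r i := by
  intro i
  obtain ⟨x, hx⟩ := hmem i
  set M : Matrix (Fin n) (Fin n) ℂ := σ i • E - A with hMdef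
  have hM : IsUnit M.det := hfull i
  set N : Matrix (Fin q) (Fin q) ℂ := σ i • (Wᵀ * E * V) - Wᵀ * A * V with hNdef
  have hN : IsUnit N.det := hred i
  have hNeq : N = Wᵀ * M * V := by
    simp only [hNdef, hMdef, Matrix.mul_sub, Matrix.sub_mul, Matrix.mul_smul,
      Matrix.smul_mul]
  have hinvneg : (A - σ i • E)⁻¹ = -M⁻¹ := by
    rw [show A - σ i • E = -M by simp [hMdef]]
    apply Matrix.inv_eq_left_inv
    rw [Matrix.neg_mul, Matrix.mul_neg, neg_neg, Matrix.nonsing_inv_mul _ hM]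
  -- key: M *ᵥ (V *ᵥ x) = -(B *ᵥ r i)
  have hkey : M *ᵥ (V *ᵥ x) = -(B *ᵥ r i) := by
    rw [hx, hinvneg, Matrix.neg_mulVec, Matrix.mulVec_neg, Matrix.mulVec_mulVec,
      Matrix.mul_nonsing_inv _ hM, Matrix.one_mulVec]
  -- N *ᵥ x = -((Wᵀ * B) *ᵥ r i)
  have hNx : N *ᵥ x = -((Wᵀ * B) *ᵥ r i) := by
    rw [hNeq]
    calc (Wᵀ * M * V) *ᵥ x = Wᵀ *ᵥ (M *ᵥ (V *ᵥ x)) := by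
          rw [Matrix.mulVec_mulVec, Matrix.mulVec_mulVec, Matrix.mul_assoc]
      _ = -((Wᵀ * B) *ᵥ r i) := by
          rw [hkey, Matrix.mulVec_neg, Matrix.mulVec_mulVec]
  have hNinv : N⁻¹ *ᵥ ((Wᵀ * B) *ᵥ r i) = -x := by
    rw [show (Wᵀ * B) *ᵥ r i = -(N *ᵥ x) by rw [hNx, neg_neg],
      Matrix.mulVec_neg, Matrix.mulVec_mulVec, Matrix.nonsing_inv_mul _ hN,
      Matrix.one_mulVec]
  have hMinv : M⁻¹ *ᵥ (B *ᵥ r i) = -(V *ᵥ x) := by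
    simp [hx, hinvneg, Matrix.neg_mulVec]
  calc (C * M⁻¹ * B) *ᵥ r i = C *ᵥ (M⁻¹ *ᵥ (B *ᵥ r i)) := by
        rw [Matrix.mulVec_mulVec, Matrix.mulVec_mulVec, Matrix.mul_assoc]
    _ = -(C *ᵥ (V *ᵥ x)) := by rw [hMinv, Matrix.mulVec_neg]
    _ = (C * V * N⁻¹ * (Wᵀ * B)) *ᵥ r i := by
        rw [show (C * V * N⁻¹ * (Wᵀ * B)) *ᵥ r i
            = (C * V) *ᵥ (N⁻¹ *ᵥ ((Wᵀ * B) *ᵥ r i)) by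
          rw [Matrix.mulVec_mulVec, Matrix.mulVec_mulVec, Matrix.mul_assoc,
            Matrix.mul_assoc]]
        rw [hNinv, Matrix.mulVec_neg, Matrix.mulVec_mulVec]
end

section
/- If Image(W) contains the vectors (A - μⱼ E)⁻ᵀ Cᵀ lⱼ for j = 1,…,q, then the Petrov–Galerkin reduced model satisfies lⱼᵀ G(μⱼ) = lⱼᵀ G_r(μⱼ) for all j, provided μⱼ is not a generalized eigenvalue of the reduced pencil. -/
open Matrix

/-- If `Image(W)` contains the vectors `(A - μⱼ E)⁻ᵀ Cᵀ lⱼ`, then the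
Petrov-Galerkin reduced model satisfies `lⱼᵀ G(μⱼ) = lⱼᵀ G_r(μⱼ)`, provided `μⱼ`
is not a generalized eigenvalue of the reduced pencil. -/
theorem stmt3 {n m p q : ℕ}
    (E A : Matrix (Fin n) (Fin n) ℂ) (B : Matrix (Fin n) (Fin m) ℂ)
    (C : Matrix (Fin p) (Fin n) ℂ)
    (V W : Matrix (Fin n) (Fin q) ℂ)
    (μ : Fin q → ℂ) (l : Fin q → Fin p → ℂ) (hl : ∀ j, l j ≠ 0)
    (hfull : ∀ j, IsUnit (μ j • E - A).det)
    (hred : ∀ j, IsUnit (μ j • (Wᵀ * E * V) - Wᵀ * A * V).det)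
    (hmem : ∀ j, ∃ x : Fin q → ℂ, W *ᵥ x = ((A - μ j • E)ᵀ)⁻¹ *ᵥ (Cᵀ *ᵥ l j)) :
    ∀ j, l j ᵥ* (C * (μ j • E - A)⁻¹ * B)
        = l j ᵥ* (C * V * (μ j • (Wᵀ * E * V) - Wᵀ * A * V)⁻¹ * (Wᵀ * B)) := by
  intro j
  obtain ⟨x, hx⟩ := hmem j
  set M := μ j • E - A with hM
  set Mr := μ j • (Wᵀ * E * V) - Wᵀ * A * V with hMr
  have hMdet : IsUnit M.det := hfull j
  have hneg : A - μ j • E = -M := by rw [hM]; abel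
  have hMtdet : IsUnit ((A - μ j • E)ᵀ).det := by
    rw [Matrix.det_transpose, hneg, Matrix.det_neg]
    exact ((isUnit_one.neg).pow _).mul hMdet
  have h1 : (A - μ j • E)ᵀ *ᵥ (W *ᵥ x) = Cᵀ *ᵥ l j := by
    rw [hx, Matrix.mulVec_mulVec, Matrix.mul_nonsing_inv _ hMtdet, Matrix.one_mulVec]
  have h2 : (W *ᵥ x) ᵥ* (A - μ j • E) = l j ᵥ* C := by
    rw [← Matrix.mulVec_transpose, ← Matrix.mulVec_transpose]; exact h1
  have hC : l j ᵥ* C = -(x ᵥ* (Wᵀ * M)) := by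
    rw [← h2, ← Matrix.vecMul_transpose, Matrix.vecMul_vecMul, hneg,
      Matrix.mul_neg, Matrix.vecMul_neg]
  have hWMV : Wᵀ * M * V = Mr := by
    rw [hM, hMr, Matrix.mul_sub, Matrix.sub_mul, Matrix.mul_smul, Matrix.smul_mul,
      Matrix.mul_assoc, Matrix.mul_assoc]
  calc l j ᵥ* (C * M⁻¹ * B)
      = ((l j ᵥ* C) ᵥ* M⁻¹) ᵥ* B := by
        rw [Matrix.vecMul_vecMul, Matrix.vecMul_vecMul, Matrix.mul_assoc]
    _ = -(x ᵥ* (Wᵀ * B)) := by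
        rw [hC, Matrix.neg_vecMul, Matrix.vecMul_vecMul, Matrix.mul_assoc,
          Matrix.mul_nonsing_inv _ hMdet, Matrix.mul_one, Matrix.neg_vecMul,
          Matrix.vecMul_vecMul]
    _ = (((l j ᵥ* C) ᵥ* V) ᵥ* Mr⁻¹) ᵥ* (Wᵀ * B) := by
        rw [hC, Matrix.neg_vecMul, Matrix.neg_vecMul, Matrix.neg_vecMul,
          Matrix.vecMul_vecMul, Matrix.vecMul_vecMul x (Wᵀ * M) V, hWMV,
          Matrix.vecMul_vecMul, ← Matrix.mul_assoc,
          Matrix.mul_nonsing_inv _ (hred j), Matrix.one_mul]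
    _ = l j ᵥ* (C * V * Mr⁻¹ * (Wᵀ * B)) := by
        rw [Matrix.vecMul_vecMul, Matrix.vecMul_vecMul, Matrix.vecMul_vecMul,
          Matrix.mul_assoc, Matrix.mul_assoc]
end

section
/- If both (A - σᵢE)⁻¹ B rᵢ ∈ Image(V) and (A - σᵢE)⁻ᵀ Cᵀ lᵢ ∈ Image(W), then additionally the Hermite condition lᵢᵀ G'(σᵢ) rᵢ = lᵢᵀ G_r'(σᵢ) rᵢ holds for the Petrov–Galerkin reduced model. -/
/-! With `K = σE - A`, differentiating the resolvent gives `lᵀ G'(σ) r = -(lᵀ C K⁻¹ E K⁻¹ B r)`,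
and likewise for the reduced model, whose pencil at `σ` is `Wᵀ K V`. Writing `K⁻¹ B r = V x` and
`K⁻ᵀ Cᵀ l = W y`, the full quantity is `(W y)ᵀ E (V x)`. The reduced systems
`(Wᵀ K V) x = Wᵀ B r` and `(Wᵀ K V)ᵀ y = Vᵀ Cᵀ l` are solved by the same `x` and `y`, so the reduced
quantity is `yᵀ (Wᵀ E V) x`, the same number. -/

open Matrix

theorem HasDerivAt.ringInverse {𝕜 R : Type*} [NontriviallyNormedField 𝕜] [NormedRing R]
    [HasSummableGeomSeries R] [NormedAlgebra 𝕜 R] {f : 𝕜 → R} {f' : R} {x : 𝕜}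
    (hf : HasDerivAt f f' x) (hx : IsUnit (f x)) :
    HasDerivAt (fun s => Ring.inverse (f s))
      (-(Ring.inverse (f x) * f' * Ring.inverse (f x))) x := by
  obtain ⟨u, hu⟩ := hx
  have hinv := hasFDerivAt_ringInverse (𝕜 := 𝕜) u
  rw [hu] at hinv
  simpa [← hu, Function.comp_def] using hinv.comp_hasDerivAt x hf

namespace Matrix

section Resolvent

-- Any norm inducing the product topology would do; the statements below do not depend on it.
attribute [local instance] Matrix.linftyOpNormedRing Matrix.linftyOpNormedAlgebra

variable {𝕜 n : Type*} [RCLike 𝕜] [Fintype n] [DecidableEq n]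

theorem hasDerivAt_inv_smul_sub (E A : Matrix n n 𝕜) {σ : 𝕜} (h : IsUnit (σ • E - A).det) :
    HasDerivAt (fun s : 𝕜 => (s • E - A)⁻¹) (-((σ • E - A)⁻¹ * E * (σ • E - A)⁻¹)) σ := by
  have hpencil : HasDerivAt (fun s : 𝕜 => s • E - A) E σ := by
    have := ((hasDerivAt_id σ).smul_const E).sub_const A
    simp only [id, one_smul] at this
    exact this
  have := hpencil.ringInverse ((isUnit_iff_isUnit_det _).mpr h)
  simp only [← nonsing_inv_eq_ringInverse] at this
  exact this

theorem _root_.HasDerivAt.dotProduct_mul_mul_mulVec {m p : Type*} [Fintype m] [Fintype p]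
    {f : 𝕜 → Matrix n n 𝕜} {f' : Matrix n n 𝕜} {x : 𝕜} (hf : HasDerivAt f f' x)
    (l : p → 𝕜) (C : Matrix p n 𝕜) (B : Matrix n m 𝕜) (r : m → 𝕜) :
    HasDerivAt (fun s => l ⬝ᵥ ((C * f s * B) *ᵥ r)) (l ⬝ᵥ ((C * f' * B) *ᵥ r)) x := by
  let L : Matrix n n 𝕜 →ₗ[𝕜] 𝕜 :=
    { toFun := fun X => l ⬝ᵥ ((C * X * B) *ᵥ r)
      map_add' := fun X Y => by rw [Matrix.mul_add, Matrix.add_mul, add_mulVec, dotProduct_add]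
      map_smul' := fun c X => by
        rw [Matrix.mul_smul, Matrix.smul_mul, smul_mulVec, dotProduct_smul]
        rfl }
  exact (LinearMap.toContinuousLinearMap L).hasFDerivAt.comp_hasDerivAt x hf

end Resolvent

section PetrovGalerkin

variable {R n k p m : Type*} [CommRing R] [Fintype n] [DecidableEq n] [Fintype k] [DecidableEq k]
  [Fintype p] [Fintype m]

theorem inv_neg (A : Matrix n n R) : (-A)⁻¹ = -A⁻¹ := by
  by_cases hA : IsUnit A.det
  · exact inv_eq_left_inv (by rw [neg_mul_neg, nonsing_inv_mul _ hA])
  · have hnA : ¬IsUnit (-A).det := by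
      simpa [det_neg, IsUnit.mul_iff, (isUnit_neg_one.pow _ : IsUnit ((-1 : R) ^ Fintype.card n))]
        using hA
    rw [nonsing_inv_apply_not_isUnit _ hA, nonsing_inv_apply_not_isUnit _ hnA, neg_zero]

theorem galerkin_inv_mulVec {K : Matrix n n R} {V W : Matrix n k R} {b : n → R} {x : k → R}
    (hK : IsUnit K.det) (hKr : IsUnit (Wᵀ * K * V).det) (hx : K⁻¹ *ᵥ b = V *ᵥ x) :
    (Wᵀ * K * V)⁻¹ *ᵥ (Wᵀ *ᵥ b) = x := by
  have hsolve : (Wᵀ * K * V) *ᵥ x = Wᵀ *ᵥ b := by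
    rw [← mulVec_mulVec, ← hx, mulVec_mulVec, Matrix.mul_assoc, mul_nonsing_inv _ hK,
      Matrix.mul_one]
  rw [← hsolve, mulVec_mulVec, nonsing_inv_mul _ hKr, one_mulVec]

theorem dotProduct_mul_inv_mul_inv_mul_mulVec (l : p → R) (C : Matrix p n R) (K E : Matrix n n R)
    (B : Matrix n m R) (r : m → R) :
    l ⬝ᵥ ((C * (K⁻¹ * E * K⁻¹) * B) *ᵥ r)
      = ((Kᵀ)⁻¹ *ᵥ (Cᵀ *ᵥ l)) ⬝ᵥ (E *ᵥ (K⁻¹ *ᵥ (B *ᵥ r))) := by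
  rw [← transpose_nonsing_inv, mulVec_transpose, mulVec_transpose, ← dotProduct_mulVec,
    ← dotProduct_mulVec]
  simp only [mulVec_mulVec, dotProduct_mulVec, Matrix.mul_assoc]

theorem dotProduct_galerkin_mul_inv_mul_inv_mul_mulVec {K E : Matrix n n R} {V W : Matrix n k R}
    {C : Matrix p n R} {B : Matrix n m R} {l : p → R} {r : m → R} {x y : k → R}
    (hK : IsUnit K.det) (hKr : IsUnit (Wᵀ * K * V).det)
    (hV : K⁻¹ *ᵥ (B *ᵥ r) = V *ᵥ x) (hW : (Kᵀ)⁻¹ *ᵥ (Cᵀ *ᵥ l) = W *ᵥ y) :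
    l ⬝ᵥ ((C * V * ((Wᵀ * K * V)⁻¹ * (Wᵀ * E * V) * (Wᵀ * K * V)⁻¹) * (Wᵀ * B)) *ᵥ r)
      = l ⬝ᵥ ((C * (K⁻¹ * E * K⁻¹) * B) *ᵥ r) := by
  have hx : (Wᵀ * K * V)⁻¹ *ᵥ ((Wᵀ * B) *ᵥ r) = x := by
    rw [← mulVec_mulVec]
    exact galerkin_inv_mulVec hK hKr hV
  have hy : ((Wᵀ * K * V)ᵀ)⁻¹ *ᵥ ((C * V)ᵀ *ᵥ l) = y := by
    have hKrT : (Wᵀ * K * V)ᵀ = Vᵀ * Kᵀ * W := by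
      rw [transpose_mul, transpose_mul, transpose_transpose, Matrix.mul_assoc]
    -- the transposed reduced problem is the Petrov-Galerkin projection of `Kᵀ`, roles of `V`, `W`
    -- swapped
    rw [hKrT, transpose_mul, ← mulVec_mulVec]
    rw [← det_transpose, hKrT] at hKr
    exact galerkin_inv_mulVec (by rwa [det_transpose]) hKr hW
  rw [dotProduct_mul_inv_mul_inv_mul_mulVec, dotProduct_mul_inv_mul_inv_mul_mulVec, hx, hy, hV, hW,
    ← mulVec_mulVec, ← mulVec_mulVec, dotProduct_mulVec, vecMul_transpose]

end PetrovGalerkin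

end Matrix

theorem stmt4_general {n m p q : ℕ}
    (E A : Matrix (Fin n) (Fin n) ℂ) (B : Matrix (Fin n) (Fin m) ℂ)
    (C : Matrix (Fin p) (Fin n) ℂ)
    (V W : Matrix (Fin n) (Fin q) ℂ)
    (σ : Fin q → ℂ) (r : Fin q → Fin m → ℂ) (l : Fin q → Fin p → ℂ)
    (hfull : ∀ i, IsUnit (σ i • E - A).det)
    (hred : ∀ i, IsUnit (σ i • (Wᵀ * E * V) - Wᵀ * A * V).det)
    (hmemV : ∀ i, ∃ x : Fin q → ℂ, V *ᵥ x = (A - σ i • E)⁻¹ *ᵥ (B *ᵥ r i))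
    (hmemW : ∀ i, ∃ x : Fin q → ℂ, W *ᵥ x = ((A - σ i • E)ᵀ)⁻¹ *ᵥ (Cᵀ *ᵥ l i)) :
    ∀ i, deriv (fun s : ℂ => l i ⬝ᵥ ((C * (s • E - A)⁻¹ * B) *ᵥ r i)) (σ i)
       = deriv (fun s : ℂ =>
           l i ⬝ᵥ ((C * V * (s • (Wᵀ * E * V) - Wᵀ * A * V)⁻¹ * (Wᵀ * B)) *ᵥ r i)) (σ i) := by
  intro i
  obtain ⟨x, hx⟩ := hmemV i
  obtain ⟨y, hy⟩ := hmemW i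
  have hneg : A - σ i • E = -(σ i • E - A) := (neg_sub _ _).symm
  have hKr : σ i • (Wᵀ * E * V) - Wᵀ * A * V = Wᵀ * (σ i • E - A) * V := by
    simp only [Matrix.mul_sub, Matrix.sub_mul, Matrix.mul_smul, Matrix.smul_mul]
  rw [((hasDerivAt_inv_smul_sub E A (hfull i)).dotProduct_mul_mul_mulVec (l i) C B (r i)).deriv,
    ((hasDerivAt_inv_smul_sub _ _ (hred i)).dotProduct_mul_mul_mulVec (l i) (C * V) (Wᵀ * B)
      (r i)).deriv]
  simp only [Matrix.mul_neg, Matrix.neg_mul, neg_mulVec, dotProduct_neg, neg_inj, hKr]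
  refine (dotProduct_galerkin_mul_inv_mul_inv_mul_mulVec (x := -x) (y := -y)
      (hfull i) (hKr ▸ hred i) ?_ ?_).symm
  · rw [mulVec_neg, hx, hneg, Matrix.inv_neg, neg_mulVec, neg_neg]
  · rw [mulVec_neg, hy, hneg, transpose_neg, Matrix.inv_neg, neg_mulVec, neg_neg]

/-- If both `(A - σᵢE)⁻¹ B rᵢ ∈ Image(V)` and `(A - σᵢE)⁻ᵀ Cᵀ lᵢ ∈ Image(W)`,
then the Hermite condition `lᵢᵀ G'(σᵢ) rᵢ = lᵢᵀ G_r'(σᵢ) rᵢ` holds for the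
Petrov-Galerkin reduced model. -/
theorem stmt4 {n m p q : ℕ}
    (E A : Matrix (Fin n) (Fin n) ℂ) (B : Matrix (Fin n) (Fin m) ℂ)
    (C : Matrix (Fin p) (Fin n) ℂ)
    (V W : Matrix (Fin n) (Fin q) ℂ)
    (σ : Fin q → ℂ) (r : Fin q → Fin m → ℂ) (l : Fin q → Fin p → ℂ)
    (hr : ∀ i, r i ≠ 0) (hl : ∀ i, l i ≠ 0)
    (hfull : ∀ i, IsUnit (σ i • E - A).det)
    (hred : ∀ i, IsUnit (σ i • (Wᵀ * E * V) - Wᵀ * A * V).det)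
    (hmemV : ∀ i, ∃ x : Fin q → ℂ, V *ᵥ x = (A - σ i • E)⁻¹ *ᵥ (B *ᵥ r i))
    (hmemW : ∀ i, ∃ x : Fin q → ℂ, W *ᵥ x = ((A - σ i • E)ᵀ)⁻¹ *ᵥ (Cᵀ *ᵥ l i)) :
    ∀ i, deriv (fun s : ℂ => l i ⬝ᵥ ((C * (s • E - A)⁻¹ * B) *ᵥ r i)) (σ i)
       = deriv (fun s : ℂ =>
           l i ⬝ᵥ ((C * V * (s • (Wᵀ * E * V) - Wᵀ * A * V)⁻¹ * (Wᵀ * B)) *ᵥ r i)) (σ i) :=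
  stmt4_general E A B C V W σ r l hfull hred hmemV hmemW
end

section
/- If Σ_M = (E_M, A_M, B_M, C_M) is asymptotically stable with E_M nonsingular and P is the controllability Gramian solving A_M P E_M* + E_M P A_M* + B_M B_M* = 0, then for any nonsingular E_r, the system Σ_r with A_r = E_r P⁻¹ E_M⁻¹ A_M P, B_r = -E_r P⁻¹ E_M⁻¹ B_M, C_r = -C_M P has the same transfer function: C_r(sE_r - A_r)⁻¹B_r = C_M(sE_M - A_M)⁻¹B_M. -/
open Matrix
open scoped ComplexOrder

/-- If `Σ_M = (E_M, A_M, B_M, C_M)` is asymptotically stable with `E_M`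
nonsingular and `P` is the controllability Gramian solving
`A_M P E_M* + E_M P A_M* + B_M B_M* = 0`, then for any nonsingular `E_r`, the system with
`A_r = E_r P⁻¹ E_M⁻¹ A_M P`, `B_r = -E_r P⁻¹ E_M⁻¹ B_M`, `C_r = -C_M P` has the same
transfer function. -/
theorem stmt13 {q m p : ℕ}
    (EM AM : Matrix (Fin q) (Fin q) ℂ)
    (BM : Matrix (Fin q) (Fin m) ℂ) (CM : Matrix (Fin p) (Fin q) ℂ)
    (hEM : IsUnit EM.det)
    (hstab : ∀ μ : ℂ, (μ • EM - AM).det = 0 → μ.re < 0)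
    (P : Matrix (Fin q) (Fin q) ℂ) (hPD : P.PosDef)
    (hLyap : AM * P * EMᴴ + EM * P * AMᴴ + BM * BMᴴ = 0)
    (Er : Matrix (Fin q) (Fin q) ℂ) (hEr : IsUnit Er.det) :
    ∀ s : ℂ, IsUnit (s • EM - AM).det →
      (-(CM * P)) * (s • Er - Er * P⁻¹ * EM⁻¹ * AM * P)⁻¹ * (-(Er * P⁻¹ * EM⁻¹ * BM))
        = CM * (s • EM - AM)⁻¹ * BM := by
  intro s hs
  have hP : IsUnit P.det := hPD.isUnit.map (Matrix.detMonoidHom)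
  have hPinv : P * P⁻¹ = 1 := Matrix.mul_nonsing_inv P hP
  have hPinv' : P⁻¹ * P = 1 := Matrix.nonsing_inv_mul P hP
  have hEMinv : EM⁻¹ * EM = 1 := Matrix.nonsing_inv_mul EM hEM
  have hErinv : Er⁻¹ * Er = 1 := Matrix.nonsing_inv_mul Er hEr
  have key : s • Er - Er * P⁻¹ * EM⁻¹ * AM * P
      = Er * P⁻¹ * (EM⁻¹ * ((s • EM - AM) * P)) := by
    have h1 : EM⁻¹ * ((s • EM - AM) * P) = s • P - EM⁻¹ * AM * P := by
      rw [Matrix.sub_mul, Matrix.mul_sub, Matrix.smul_mul, Matrix.mul_smul, ← Matrix.mul_assoc,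
        hEMinv, Matrix.one_mul, Matrix.mul_assoc]
    rw [h1, Matrix.mul_sub, Matrix.mul_smul, Matrix.mul_assoc Er P⁻¹ P, hPinv', Matrix.mul_one]
    congr 1
    simp only [Matrix.mul_assoc]
  rw [key]
  have hinv : (Er * P⁻¹ * (EM⁻¹ * ((s • EM - AM) * P)))⁻¹
      = P⁻¹ * (s • EM - AM)⁻¹ * EM * P * Er⁻¹ := by
    rw [Matrix.mul_inv_rev, Matrix.mul_inv_rev, Matrix.mul_inv_rev, Matrix.mul_inv_rev,
      Matrix.nonsing_inv_nonsing_inv P hP, Matrix.nonsing_inv_nonsing_inv EM hEM]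
    noncomm_ring
  rw [hinv]
  have : CM * P * (P⁻¹ * (s • EM - AM)⁻¹ * EM * P * Er⁻¹) * (Er * P⁻¹ * EM⁻¹ * BM)
      = CM * (s • EM - AM)⁻¹ * BM := by
    have hEMinv' : EM * EM⁻¹ = 1 := Matrix.mul_nonsing_inv EM hEM
    calc CM * P * (P⁻¹ * (s • EM - AM)⁻¹ * EM * P * Er⁻¹) * (Er * P⁻¹ * EM⁻¹ * BM)
        = CM * (P * P⁻¹) * (s • EM - AM)⁻¹ * (EM * (P * ((Er⁻¹ * Er) * (P⁻¹ * (EM⁻¹ * BM))))) := by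
          simp only [Matrix.mul_assoc]
      _ = CM * (s • EM - AM)⁻¹ * BM := by
          rw [hPinv, hErinv, Matrix.mul_one, Matrix.one_mul, ← Matrix.mul_assoc P P⁻¹, hPinv,
            Matrix.one_mul, ← Matrix.mul_assoc EM EM⁻¹, hEMinv', Matrix.one_mul]
  rw [Matrix.neg_mul, Matrix.mul_neg, Matrix.neg_mul, neg_neg, this]
end

section
/- Under the same construction (E_M = I, A_M = -S*, B_M = R*, controllability Gramian P), the matrix F = E_r⁻¹ B_r satisfies Λ(S) ∩ Λ(S + F R) = ∅, since S + F R = -P⁻¹ S* P has eigenvalues equal to {-conj(σ) : σ ∈ Λ(S)}, disjoint from Λ(S) because all eigenvalues of S have positive real part. -/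
open Matrix
open scoped ComplexOrder

lemma spec_conjT {q : ℕ} (A : Matrix (Fin q) (Fin q) ℂ) :
    spectrum ℂ Aᴴ = (starRingEnd ℂ) '' spectrum ℂ A := by
  ext μ
  have key : ∀ (B : Matrix (Fin q) (Fin q) ℂ) (z : ℂ),
      z ∈ spectrum ℂ B ↔ ¬ IsUnit ((z • 1 - B).det) := by
    intro B z
    rw [spectrum.mem_iff, ← Matrix.isUnit_iff_isUnit_det]
    simp [Algebra.algebraMap_eq_smul_one]
  constructor
  · intro h
    refine ⟨starRingEnd ℂ μ, ?_, by simp⟩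
    rw [key] at h ⊢
    intro hu; apply h
    have : (μ • (1 : Matrix (Fin q) (Fin q) ℂ) - Aᴴ) = ((starRingEnd ℂ μ) • 1 - A)ᴴ := by
      simp
    rw [this, Matrix.det_conjTranspose] at *
    exact (isUnit_iff_ne_zero.2 (by simpa using isUnit_iff_ne_zero.1 hu))
  · rintro ⟨z, hz, rfl⟩
    rw [key] at hz ⊢
    intro hu; apply hz
    have : ((starRingEnd ℂ z) • (1 : Matrix (Fin q) (Fin q) ℂ) - Aᴴ) = (z • 1 - A)ᴴ := by simp
    rw [this, Matrix.det_conjTranspose] at hu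
    exact isUnit_iff_ne_zero.2 (by simpa using isUnit_iff_ne_zero.1 hu)

/-- With `P` the unique solution of `S*P + PS = R*R`, `B_r = -E_r P⁻¹ R*` and
`F = E_r⁻¹ B_r`, one has `S + F R = -P⁻¹ S* P`, whose eigenvalues are
`{-conj(σ) : σ ∈ Λ(S)}`; since all eigenvalues of `S` have positive real part,
`Λ(S) ∩ Λ(S + F R) = ∅`. -/
theorem stmt15 {q m : ℕ}
    (S : Matrix (Fin q) (Fin q) ℂ) (R : Matrix (Fin m) (Fin q) ℂ)
    (hS : ∀ μ ∈ spectrum ℂ S, 0 < μ.re)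
    (hctrb : ∀ (μ : ℂ) (v : Fin q → ℂ),
      v ᵥ* (μ • (1 : Matrix (Fin q) (Fin q) ℂ) + Sᴴ) = 0 → v ᵥ* Rᴴ = 0 → v = 0)
    (P : Matrix (Fin q) (Fin q) ℂ) (hPD : P.PosDef)
    (hLyap : Sᴴ * P + P * S = Rᴴ * R)
    (Er : Matrix (Fin q) (Fin q) ℂ) (hEr : IsUnit Er.det) :
    let F : Matrix (Fin q) (Fin m) ℂ := Er⁻¹ * (-(Er * P⁻¹ * Rᴴ))
    S + F * R = -(P⁻¹ * Sᴴ * P) ∧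
    spectrum ℂ (S + F * R) = (fun μ : ℂ => -(starRingEnd ℂ μ)) '' spectrum ℂ S ∧
    spectrum ℂ S ∩ spectrum ℂ (S + F * R) = ∅ := by
  intro F
  have hP : IsUnit P.det := isUnit_iff_ne_zero.2 (by exact_mod_cast ne_of_gt hPD.det_pos)
  have hF : F = -(P⁻¹ * Rᴴ) := by
    simp only [F, Matrix.mul_neg, neg_inj, ← Matrix.mul_assoc,
      Matrix.nonsing_inv_mul Er hEr, Matrix.one_mul]
  have h1 : S + F * R = -(P⁻¹ * Sᴴ * P) := by
    rw [hF]
    have : P⁻¹ * (Rᴴ * R) = P⁻¹ * Sᴴ * P + S := by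
      rw [← hLyap, Matrix.mul_add, ← Matrix.mul_assoc, ← Matrix.mul_assoc,
        Matrix.nonsing_inv_mul P hP, Matrix.one_mul]
    rw [Matrix.neg_mul, Matrix.mul_assoc, this]
    abel
  refine ⟨h1, ?_, ?_⟩
  · have hu : IsUnit P := P.isUnit_iff_isUnit_det.mpr hP
    obtain ⟨u, hu'⟩ := hu
    have hinv : P⁻¹ = (↑u⁻¹ : Matrix (Fin q) (Fin q) ℂ) := by
      rw [Matrix.coe_units_inv, hu']
    have hconj : spectrum ℂ (P⁻¹ * Sᴴ * P) = spectrum ℂ Sᴴ := by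
      rw [hinv, ← hu']; exact spectrum.units_conjugate'
    rw [h1, ← spectrum.neg_eq, hconj, spec_conjT]
    ext μ
    simp only [Set.mem_neg, Set.mem_image]
    constructor
    · rintro ⟨z, hz, hzμ⟩; exact ⟨z, hz, by rw [hzμ, neg_neg]⟩
    · rintro ⟨z, hz, rfl⟩; exact ⟨z, hz, by simp⟩
  · ext μ
    simp only [Set.mem_inter_iff, Set.mem_empty_iff_false, iff_false, not_and]
    intro h1μ h2μ
    have hpos := hS μ h1μ
    rw [h1, ← spectrum.neg_eq] at h2μ
    have hconj : spectrum ℂ (P⁻¹ * Sᴴ * P) = spectrum ℂ Sᴴ := by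
      have hu : IsUnit P := P.isUnit_iff_isUnit_det.mpr hP
      obtain ⟨u, hu'⟩ := hu
      have hinv : P⁻¹ = (↑u⁻¹ : Matrix (Fin q) (Fin q) ℂ) := by
        rw [Matrix.coe_units_inv, hu']
      rw [hinv, ← hu']; exact spectrum.units_conjugate'
    rw [hconj, spec_conjT] at h2μ
    obtain ⟨z, hz, hzμ⟩ := h2μ
    have : (-μ).re > 0 := by
      have := hS z hz
      have : μ = -(starRingEnd ℂ z) := by rw [hzμ, neg_neg]
      rw [this]; simpa using hS z hz
    simp at this; linarith
end

section
/- The PORK reduced model E_r = P, A_r = -S* P, B_r = -R*, C_r = C V (with P the solution of S*P + PS - R*R = 0 and V solving A V - E V S - B R = 0) has transfer function equal to C V (sI - S - P⁻¹(-R*)R)⁻¹ P⁻¹(-R*), i.e., it coincides with the parametrized family G_F(s) = CV(sI - S - FR)⁻¹F for F = -P⁻¹R*; consequently G_r(σᵢ)rᵢ = G(σᵢ)rᵢ for each eigenvalue σᵢ of S with direction rᵢ. -/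
open Matrix
open scoped ComplexOrder

/-- The PORK reduced model `(E_r, A_r, B_r, C_r) = (P, -S*P, -R*, CV)` has
transfer function coinciding with the parametrized family `G_F(s) = CV(sI - S - FR)⁻¹F`
for `F = -P⁻¹R*`; consequently it tangentially interpolates `G` at the eigenvalues `σᵢ`
of `S` along the directions `rᵢ`. -/
theorem stmt16 {n m p q : ℕ}
    (E A : Matrix (Fin n) (Fin n) ℂ) (B : Matrix (Fin n) (Fin m) ℂ)
    (C : Matrix (Fin p) (Fin n) ℂ)
    (S : Matrix (Fin q) (Fin q) ℂ) (R : Matrix (Fin m) (Fin q) ℂ)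
    (T : Matrix (Fin q) (Fin q) ℂ) (hT : IsUnit T.det)
    (σ : Fin q → ℂ) (hσinj : Function.Injective σ)
    (hdiag : T * S * T⁻¹ = Matrix.diagonal σ)
    (hσre : ∀ i, 0 < (σ i).re)
    (hσspec : ∀ i, IsUnit (σ i • E - A).det)
    (hr : ∀ i, (fun k => (R * T⁻¹) k i) ≠ 0)
    (hctrb : ∀ (μ : ℂ) (v : Fin q → ℂ),
      v ᵥ* (μ • (1 : Matrix (Fin q) (Fin q) ℂ) + Sᴴ) = 0 → v ᵥ* Rᴴ = 0 → v = 0)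
    (V : Matrix (Fin n) (Fin q) ℂ) (hV : A * V - E * V * S = B * R)
    (P : Matrix (Fin q) (Fin q) ℂ) (hPD : P.PosDef)
    (hLyap : Sᴴ * P + P * S = Rᴴ * R) :
    (∀ s : ℂ,
      IsUnit (s • (1 : Matrix (Fin q) (Fin q) ℂ) - S - (-(P⁻¹ * Rᴴ)) * R).det →
        (C * V) * (s • P - (-(Sᴴ * P)))⁻¹ * (-(Rᴴ))
          = (C * V) * (s • (1 : Matrix (Fin q) (Fin q) ℂ) - S - (-(P⁻¹ * Rᴴ)) * R)⁻¹ *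
              (-(P⁻¹ * Rᴴ))) ∧
    (∀ i, (C * (σ i • E - A)⁻¹ * B) *ᵥ (fun k => (R * T⁻¹) k i)
        = ((C * V) * (σ i • P - (-(Sᴴ * P)))⁻¹ * (-(Rᴴ))) *ᵥ (fun k => (R * T⁻¹) k i)) := by
  have hPdet : IsUnit P.det := hPD.det_pos.ne'.isUnit
  have hPinv : P * P⁻¹ = 1 := Matrix.mul_nonsing_inv _ hPdet
  have hSP : Sᴴ * P = Rᴴ * R - P * S := eq_sub_of_add_eq hLyap
  -- factorization lemma used for part 1
  have key : ∀ s : ℂ, s • P - (-(Sᴴ * P))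
      = P * (s • (1 : Matrix (Fin q) (Fin q) ℂ) - S - (-(P⁻¹ * Rᴴ)) * R) := by
    intro s
    have h2 : P * (P⁻¹ * (Rᴴ * R)) = Rᴴ * R := by
      rw [← Matrix.mul_assoc P, hPinv, Matrix.one_mul]
    calc s • P - -(Sᴴ * P) = s • P + (Rᴴ * R - P * S) := by rw [hSP, sub_neg_eq_add]
      _ = s • P - P * S - -(Rᴴ * R) := by abel
      _ = P * (s • (1 : Matrix (Fin q) (Fin q) ℂ) - S - (-(P⁻¹ * Rᴴ)) * R) := by
          simp only [Matrix.mul_sub, Matrix.mul_neg, Matrix.neg_mul, Matrix.mul_smul,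
            Matrix.mul_one, Matrix.mul_assoc, h2]
  constructor
  · intro s hs
    rw [key s, Matrix.mul_inv_rev]
    simp only [Matrix.mul_neg, Matrix.mul_assoc]
  · intro i
    set t : Fin q → ℂ := fun k => T⁻¹ k i with ht
    have hrt : (fun k => (R * T⁻¹) k i) = R *ᵥ t := by
      funext k
      simp [Matrix.mul_apply, Matrix.mulVec, dotProduct, ht]
    -- eigenvector relation
    have hST : S * T⁻¹ = T⁻¹ * Matrix.diagonal σ := by
      calc S * T⁻¹ = T⁻¹ * (T * S * T⁻¹) := by
            rw [← Matrix.mul_assoc, ← Matrix.mul_assoc,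
              Matrix.nonsing_inv_mul _ hT, Matrix.one_mul]
        _ = T⁻¹ * Matrix.diagonal σ := by rw [hdiag]
    have heig : S *ᵥ t = σ i • t := by
      funext k
      have h : (S * T⁻¹) k i = (T⁻¹ * Matrix.diagonal σ) k i := by rw [hST]
      rw [Matrix.mul_diagonal] at h
      rw [Matrix.mul_apply] at h
      simpa [Matrix.mulVec, dotProduct, ht, mul_comm] using h
    -- invertibility of σᵢ • 1 + Sᴴ
    have hTH : IsUnit Tᴴ.det := by
      rw [Matrix.det_conjTranspose]; exact hT.star
    have hS : S = T⁻¹ * Matrix.diagonal σ * T := by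
      calc S = S * T⁻¹ * T := by
            rw [Matrix.mul_assoc, Matrix.nonsing_inv_mul _ hT, Matrix.mul_one]
        _ = T⁻¹ * Matrix.diagonal σ * T := by rw [hST]
    have hSH : σ i • (1 : Matrix (Fin q) (Fin q) ℂ) + Sᴴ
        = Tᴴ * (σ i • (1 : Matrix (Fin q) (Fin q) ℂ) + (Matrix.diagonal σ)ᴴ) * (Tᴴ)⁻¹ := by
      have h1 : Sᴴ = Tᴴ * (Matrix.diagonal σ)ᴴ * (Tᴴ)⁻¹ := by
        rw [hS]
        simp [Matrix.conjTranspose_mul, Matrix.conjTranspose_nonsing_inv, Matrix.mul_assoc]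
      rw [Matrix.mul_add, Matrix.add_mul, ← h1]
      congr 1
      rw [Matrix.mul_smul, Matrix.mul_one, Matrix.smul_mul,
        Matrix.mul_nonsing_inv _ hTH]
    have hdetSH : IsUnit (σ i • (1 : Matrix (Fin q) (Fin q) ℂ) + Sᴴ).det := by
      rw [hSH, Matrix.det_conj ((Matrix.isUnit_iff_isUnit_det _).2 hTH)]
      rw [Matrix.diagonal_conjTranspose, Matrix.smul_one_eq_diagonal, Matrix.diagonal_add,
        Matrix.det_diagonal]
      refine isUnit_iff_ne_zero.2 (Finset.prod_ne_zero_iff.2 fun j _ => ?_)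
      intro h
      have hre := congrArg Complex.re h
      simp only [Pi.add_apply, Pi.star_apply, Complex.add_re, Complex.zero_re,
        RCLike.star_def, Complex.conj_re] at hre
      nlinarith [hσre i, hσre j]
    have hfac : σ i • P - -(Sᴴ * P)
        = (σ i • (1 : Matrix (Fin q) (Fin q) ℂ) + Sᴴ) * P := by
      rw [sub_neg_eq_add, Matrix.add_mul, Matrix.smul_mul, Matrix.one_mul]
    have hMi : IsUnit (σ i • P - -(Sᴴ * P)).det := by
      rw [hfac, Matrix.det_mul]; exact hdetSH.mul hPdet
    -- the two key vector identities
    have hAV : A * V = B * R + E * V * S := sub_eq_iff_eq_add.mp hV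
    have hEVS : (E * V * S) *ᵥ t = σ i • ((E * V) *ᵥ t) := by
      rw [← Matrix.mulVec_mulVec t (E * V) S, heig, Matrix.mulVec_smul]
    have claim1 : (σ i • E - A) *ᵥ (V *ᵥ t) = -(B *ᵥ (R *ᵥ t)) := by
      rw [Matrix.mulVec_mulVec, Matrix.sub_mul, Matrix.sub_mulVec, hAV,
        Matrix.add_mulVec, hEVS, Matrix.smul_mul, Matrix.smul_mulVec,
        ← Matrix.mulVec_mulVec t B R]
      abel
    have claim2 : (σ i • P - -(Sᴴ * P)) *ᵥ t = Rᴴ *ᵥ (R *ᵥ t) := by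
      rw [Matrix.sub_mulVec, Matrix.neg_mulVec, hSP, Matrix.sub_mulVec,
        Matrix.smul_mulVec, ← Matrix.mulVec_mulVec t Rᴴ R,
        ← Matrix.mulVec_mulVec t P S, heig, Matrix.mulVec_smul]
      abel
    -- solve for V *ᵥ t and t
    have hVt : (σ i • E - A)⁻¹ *ᵥ (B *ᵥ (R *ᵥ t)) = -(V *ᵥ t) := by
      have h2 : (σ i • E - A)⁻¹ *ᵥ ((σ i • E - A) *ᵥ (V *ᵥ t)) = V *ᵥ t := by
        rw [Matrix.mulVec_mulVec (V *ᵥ t) (σ i • E - A)⁻¹ (σ i • E - A),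
          Matrix.nonsing_inv_mul _ (hσspec i), Matrix.one_mulVec]
      rw [claim1, Matrix.mulVec_neg] at h2
      exact neg_eq_iff_eq_neg.mp h2
    have hti : (σ i • P - -(Sᴴ * P))⁻¹ *ᵥ (Rᴴ *ᵥ (R *ᵥ t)) = t := by
      have h2 : (σ i • P - -(Sᴴ * P))⁻¹ *ᵥ ((σ i • P - -(Sᴴ * P)) *ᵥ t) = t := by
        rw [Matrix.mulVec_mulVec t (σ i • P - -(Sᴴ * P))⁻¹ (σ i • P - -(Sᴴ * P)),
          Matrix.nonsing_inv_mul _ hMi, Matrix.one_mulVec]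
      rwa [claim2] at h2
    rw [hrt,
      ← Matrix.mulVec_mulVec (R *ᵥ t) (C * (σ i • E - A)⁻¹) B,
      ← Matrix.mulVec_mulVec (B *ᵥ (R *ᵥ t)) C (σ i • E - A)⁻¹,
      hVt, Matrix.mulVec_neg,
      ← Matrix.mulVec_mulVec (R *ᵥ t) (C * V * (σ i • P - -(Sᴴ * P))⁻¹) (-Rᴴ),
      Matrix.neg_mulVec,
      ← Matrix.mulVec_mulVec (-(Rᴴ *ᵥ (R *ᵥ t))) (C * V) (σ i • P - -(Sᴴ * P))⁻¹,
      Matrix.mulVec_neg, hti, Matrix.mulVec_neg,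
      ← Matrix.mulVec_mulVec t C V]
end

section
/- For any F ∈ ℂ^{q×m} with Λ(S) ∩ Λ(S + FR) = ∅, the family of reduced transfer functions G_F(s) = CV(sI - S - FR)⁻¹F, with V solving AV - EVS - BR = 0, satisfies the right tangential interpolation conditions G(σᵢ)rᵢ = G_F(σᵢ)rᵢ for i = 1,…,q, independently of the choice of F. -/
open Matrix

/-- For any `F` with `Λ(S) ∩ Λ(S + FR) = ∅`, the family of reduced transfer
functions `G_F(s) = CV(sI - S - FR)⁻¹F`, with `V` solving `AV - EVS - BR = 0`, satisfies
the right tangential interpolation conditions `G(σᵢ)rᵢ = G_F(σᵢ)rᵢ`, independently of `F`. -/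
theorem stmt17 {n m p q : ℕ}
    (E A : Matrix (Fin n) (Fin n) ℂ) (B : Matrix (Fin n) (Fin m) ℂ)
    (C : Matrix (Fin p) (Fin n) ℂ)
    (S : Matrix (Fin q) (Fin q) ℂ) (R : Matrix (Fin m) (Fin q) ℂ)
    (T : Matrix (Fin q) (Fin q) ℂ) (hT : IsUnit T.det)
    (σ : Fin q → ℂ) (hσinj : Function.Injective σ)
    (hdiag : T * S * T⁻¹ = Matrix.diagonal σ)
    (hσspec : ∀ i, IsUnit (σ i • E - A).det)
    (hr : ∀ i, (fun k => (R * T⁻¹) k i) ≠ 0)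
    (V : Matrix (Fin n) (Fin q) ℂ) (hV : A * V - E * V * S - B * R = 0)
    (F : Matrix (Fin q) (Fin m) ℂ)
    (hF : spectrum ℂ S ∩ spectrum ℂ (S + F * R) = ∅) :
    ∀ i, (C * (σ i • E - A)⁻¹ * B) *ᵥ (fun k => (R * T⁻¹) k i)
        = (C * V * (σ i • (1 : Matrix (Fin q) (Fin q) ℂ) - S - F * R)⁻¹ * F) *ᵥ
            (fun k => (R * T⁻¹) k i) := by
  intro i
  set t : Fin q → ℂ := fun k => T⁻¹ k i with ht
  have hw : (fun k => (R * T⁻¹) k i) = R *ᵥ t := by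
    ext k
    simp [Matrix.mul_apply, Matrix.mulVec, dotProduct, ht]
  -- eigenvector relation
  have hTinv : S * T⁻¹ = T⁻¹ * Matrix.diagonal σ := by
    calc S * T⁻¹ = T⁻¹ * T * S * T⁻¹ := by rw [Matrix.nonsing_inv_mul T hT, one_mul]
      _ = T⁻¹ * (T * S * T⁻¹) := by rw [mul_assoc, mul_assoc, mul_assoc]
      _ = T⁻¹ * Matrix.diagonal σ := by rw [hdiag]
  have hSt : S *ᵥ t = σ i • t := by
    ext k
    have h2 := congrFun (congrFun hTinv k) i
    rw [Matrix.mul_diagonal] at h2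
    simpa [Matrix.mulVec, dotProduct, Matrix.mul_apply, ht, mul_comm] using h2
  have htne : t ≠ 0 := by
    intro h0
    apply hr i
    rw [hw, h0, Matrix.mulVec_zero]
  -- σ i is an eigenvalue of S
  have hmem : σ i ∈ spectrum ℂ S := by
    rw [spectrum.mem_iff, Algebra.algebraMap_eq_smul_one]
    intro hu
    have hdet : IsUnit (σ i • (1 : Matrix (Fin q) (Fin q) ℂ) - S).det :=
      (Matrix.isUnit_iff_isUnit_det _).mp hu
    have hz : (σ i • (1 : Matrix (Fin q) (Fin q) ℂ) - S) *ᵥ t = 0 := by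
      rw [Matrix.sub_mulVec, hSt, Matrix.smul_mulVec, Matrix.one_mulVec, sub_self]
    have : t = 0 := by
      have := congrArg (fun v => (σ i • (1 : Matrix (Fin q) (Fin q) ℂ) - S)⁻¹ *ᵥ v) hz
      simpa [Matrix.mulVec_mulVec, Matrix.nonsing_inv_mul _ hdet] using this
    exact htne this
  have hnotmem : σ i ∉ spectrum ℂ (S + F * R) := by
    intro h
    have : σ i ∈ spectrum ℂ S ∩ spectrum ℂ (S + F * R) := ⟨hmem, h⟩
    rw [hF] at this
    exact this
  set M : Matrix (Fin q) (Fin q) ℂ := σ i • (1 : Matrix (Fin q) (Fin q) ℂ) - S - F * R with hM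
  have hMunit : IsUnit M.det := by
    rw [← Matrix.isUnit_iff_isUnit_det]
    have := (spectrum.notMem_iff.mp hnotmem)
    rw [Algebra.algebraMap_eq_smul_one] at this
    simpa [hM, sub_add_eq_sub_sub] using this
  have hMinv : M⁻¹ * M = 1 := Matrix.nonsing_inv_mul M hMunit
  set N : Matrix (Fin n) (Fin n) ℂ := σ i • E - A with hN
  have hNinv : N⁻¹ * N = 1 := Matrix.nonsing_inv_mul N (hσspec i)
  -- key computations
  have hAV : A * V = E * V * S + B * R := by
    have h := hV; rwa [sub_sub, sub_eq_zero] at h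
  have hNV : N * V = σ i • (E * V) - E * V * S - B * R := by
    rw [hN, Matrix.sub_mul, hAV, Matrix.smul_mul, sub_add_eq_sub_sub]
  have hEVS : (E * V * S) *ᵥ t = σ i • ((E * V) *ᵥ t) := by
    rw [← Matrix.mulVec_mulVec, hSt, Matrix.mulVec_smul]
  have hNVt : N *ᵥ (V *ᵥ t) = -(B *ᵥ (R *ᵥ t)) := by
    rw [Matrix.mulVec_mulVec, Matrix.mulVec_mulVec, hNV, Matrix.sub_mulVec, Matrix.sub_mulVec,
      Matrix.smul_mulVec, hEVS]
    abel
  have hMt : M *ᵥ t = -(F *ᵥ (R *ᵥ t)) := by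
    rw [hM, Matrix.sub_mulVec, Matrix.sub_mulVec, hSt, Matrix.smul_mulVec,
      Matrix.one_mulVec, sub_self, zero_sub, Matrix.mulVec_mulVec]
  have hMinvF : M⁻¹ *ᵥ (F *ᵥ (R *ᵥ t)) = -t := by
    have h : M *ᵥ (-t) = F *ᵥ (R *ᵥ t) := by rw [Matrix.mulVec_neg, hMt, neg_neg]
    rw [← h, Matrix.mulVec_mulVec, hMinv, Matrix.one_mulVec]
  have hNinvB : N⁻¹ *ᵥ (B *ᵥ (R *ᵥ t)) = -(V *ᵥ t) := by
    have h : N *ᵥ (-(V *ᵥ t)) = B *ᵥ (R *ᵥ t) := by rw [Matrix.mulVec_neg, hNVt, neg_neg]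
    rw [← h, Matrix.mulVec_mulVec, hNinv, Matrix.one_mulVec]
  rw [hw]
  have L1 : (C * N⁻¹ * B) *ᵥ (R *ᵥ t) = C *ᵥ (N⁻¹ *ᵥ (B *ᵥ (R *ᵥ t))) := by
    simp only [Matrix.mulVec_mulVec, Matrix.mul_assoc]
  have L2 : (C * V * M⁻¹ * F) *ᵥ (R *ᵥ t) = C *ᵥ (V *ᵥ (M⁻¹ *ᵥ (F *ᵥ (R *ᵥ t)))) := by
    simp only [Matrix.mulVec_mulVec, Matrix.mul_assoc]
  rw [L1, L2, hNinvB, hMinvF]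
  simp [Matrix.mulVec_neg]
end
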